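/- If W' ∈ ℝ² satisfies the first two equations of the DEC anisotropic flux system, namely W'·w₁ = λ₁(f₃−f₂) + μ₁(f₁−f₃) and W'·w₂ = λ₂(f₁−f₃) + μ₂(f₂−f₁), then it automatically satisfies the third equation W'·w₃ = λ₃(f₂−f₁) + μ₃(f₃−f₂); i.e., the third equation of the system is dependent on the first two. -/

import Mathlib

/-
Summing the three defining relations and using `K (w₁ + w₂ + w₃) = 0` gives a vanishing
combination of `w₁` and `w₂`, which are independent since the triangle is nondegenerate.
Hence `λ₃ = μ₁ + λ₂ - μ₂` and `μ₃ = μ₁ + λ₂ - λ₁`, and the third equation is minus the sum of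
the first two, as `w₃ = -(w₁ + w₂)`.
-/

noncomputable section

def dot2 (a b : Fin 2 → ℝ) : ℝ := a 0 * b 0 + a 1 * b 1

def det2 (a b : Fin 2 → ℝ) : ℝ := a 0 * b 1 - a 1 * b 0

theorem dot2_eq_dotProduct (a b : Fin 2 → ℝ) : dot2 a b = a ⬝ᵥ b := by
  simp [dot2, dotProduct, Fin.sum_univ_two]

theorem det2_eq_det (a b : Fin 2 → ℝ) : det2 a b = (Matrix.of ![a, b]).det := by
  simp [det2, Matrix.det_fin_two]

theorem det2_add_right_self (a b : Fin 2 → ℝ) : det2 a (a + b) = det2 a b := by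
  simp only [det2, Pi.add_apply]; ring

theorem linearIndependent_of_det2_ne_zero {a b : Fin 2 → ℝ} (h : det2 a b ≠ 0) :
    LinearIndependent ℝ ![a, b] := by
  rw [det2_eq_det] at h
  exact Matrix.linearIndependent_rows_of_det_ne_zero h

theorem coeffs_third_eq_of_add_add_eq_zero {R M : Type*} [CommRing R] [AddCommGroup M] [Module R M]
    (T : M →ₗ[R] M) {w₁ w₂ w₃ : M} (hsum : w₁ + w₂ + w₃ = 0)
    (hli : LinearIndependent R ![w₁, w₂]) {l₁ m₁ l₂ m₂ l₃ m₃ : R}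
    (h₁ : T w₁ = l₁ • w₂ + m₁ • w₃) (h₂ : T w₂ = l₂ • w₃ + m₂ • w₁)
    (h₃ : T w₃ = l₃ • w₁ + m₃ • w₂) :
    l₃ = m₁ + l₂ - m₂ ∧ m₃ = m₁ + l₂ - l₁ := by
  have hw₃ : w₃ = -(w₁ + w₂) := eq_neg_of_add_eq_zero_right hsum
  have hT : T w₁ + T w₂ + T w₃ = 0 := by rw [← map_add, ← map_add, hsum, map_zero]
  rw [h₁, h₂, h₃, hw₃] at hT
  obtain ⟨h0, h1⟩ := LinearIndependent.pair_iff.mp hli (m₂ + l₃ - m₁ - l₂) (l₁ + m₃ - m₁ - l₂)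
    (by linear_combination (norm := module) hT)
  constructor
  · linear_combination h0
  · linear_combination h1

/-- If `W'` satisfies the first two equations of the DEC anisotropic flux system,
then it automatically satisfies the third: the third equation depends on the
first two. -/
theorem dec_anisotropic_flux_third_equation_dependent
    (v₁ v₂ v₃ : Fin 2 → ℝ)
    (w₁ w₂ w₃ : Fin 2 → ℝ)
    (hw₁ : w₁ = v₂ - v₁) (hw₂ : w₂ = v₃ - v₂) (hw₃ : w₃ = v₁ - v₃)
    (hA : det2 (v₂ - v₁) (v₃ - v₁) ≠ 0)
    (K : Matrix (Fin 2) (Fin 2) ℝ)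
    (l₁ m₁ l₂ m₂ l₃ m₃ : ℝ)
    (h₁ : K.mulVec w₁ = l₁ • w₂ + m₁ • w₃)
    (h₂ : K.mulVec w₂ = l₂ • w₃ + m₂ • w₁)
    (h₃ : K.mulVec w₃ = l₃ • w₁ + m₃ • w₂)
    (f₁ f₂ f₃ : ℝ) (W' : Fin 2 → ℝ)
    (hW₁ : dot2 W' w₁ = l₁ * (f₃ - f₂) + m₁ * (f₁ - f₃))
    (hW₂ : dot2 W' w₂ = l₂ * (f₁ - f₃) + m₂ * (f₂ - f₁)) :
    dot2 W' w₃ = l₃ * (f₂ - f₁) + m₃ * (f₃ - f₂) := by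
  have hsum : w₁ + w₂ + w₃ = 0 := by rw [hw₁, hw₂, hw₃]; abel
  have hli : LinearIndependent ℝ ![w₁, w₂] := by
    refine linearIndependent_of_det2_ne_zero ?_
    rwa [show v₃ - v₁ = (v₂ - v₁) + (v₃ - v₂) by abel, det2_add_right_self, ← hw₁, ← hw₂] at hA
  obtain ⟨hl₃, hm₃⟩ := coeffs_third_eq_of_add_add_eq_zero K.mulVecLin hsum hli h₁ h₂ h₃
  have hW₃ : dot2 W' w₃ = -(dot2 W' w₁ + dot2 W' w₂) := by
    rw [eq_neg_of_add_eq_zero_right hsum]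
    simp only [dot2_eq_dotProduct, dotProduct_neg, dotProduct_add]
  rw [hW₃, hW₁, hW₂, hl₃, hm₃]
  ring
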